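/- arXiv:2007.13710 — 3 statements merged into one kernel-verified Lean document; each statement's English description precedes it below -/
import Mathlib

section
/- A simple graph Γ on a finite vertex set V admits a 2-edge-colouring (R, B) with R ≠ ∅ and B ≠ ∅ such that G = (Γ, R, B) is chromatically invariant and every vertex of V is incident with at least one red edge and at least one blue edge, if and only if V admits a partition into two non-empty sets X and Y such that every vertex of X is adjacent in Γ to every vertex of Y, every vertex of X has a neighbour in X, and every vertex of Y has a neighbour in Y. -/
open SimpleGraph Polynomial

/-- A `k`-colouring of a mixed 2-edge-coloured graph with red edge graph `R`,
blue edge graph `B`, and extra uncoloured edge graph `F`. -/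
def IsMixedColouring {V : Type*} (R B F : SimpleGraph V) {k : ℕ} (c : V → Fin k) : Prop :=
  (∀ u v, (R ⊔ B ⊔ F).Adj u v → c u ≠ c v) ∧
  (∀ u x v y, R.Adj u x → B.Adj v y → c u = c v → c x ≠ c y)

/-- The number of `k`-colourings of the mixed 2-edge-coloured graph `(R, B, F)`. -/
noncomputable def numColourings {V : Type*} (R B F : SimpleGraph V) (k : ℕ) : ℕ :=
  Nat.card {c : V → Fin k // IsMixedColouring R B F c}

/-- A bichromatic 2-path `(x, u, y)`: `xu` red, `uy` blue, `xy` not an edge of `S(M)`. -/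
def IsBiPath {V : Type*} (R B F : SimpleGraph V) (x u y : V) : Prop :=
  R.Adj x u ∧ B.Adj u y ∧ ¬(R ⊔ B ⊔ F).Adj x y

/-- The number of bichromatic 2-paths. -/
noncomputable def numBiPaths {V : Type*} (R B F : SimpleGraph V) : ℕ :=
  Nat.card {p : V × V × V // IsBiPath R B F p.1 p.2.1 p.2.2}

/-- The graph `Λ(M)`: all edges of `S(M)` plus edges joining the ends of
bichromatic 2-paths. -/
def LambdaGraph {V : Type*} (R B F : SimpleGraph V) : SimpleGraph V where
  Adj a b := a ≠ b ∧ ((R ⊔ B ⊔ F).Adj a b ∨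
    ∃ w, IsBiPath R B F a w b ∨ IsBiPath R B F b w a)
  symm := ⟨by
    rintro a b ⟨hab, h⟩
    refine ⟨hab.symm, ?_⟩
    rcases h with h | ⟨w, h⟩
    · exact Or.inl h.symm
    · exact Or.inr ⟨w, h.symm⟩⟩
  loopless := ⟨fun a h => h.1 rfl⟩

/-- `(p.1, p.2)` is a pair of obstructing edges: `p.1` a red edge `ux`, `p.2` a blue edge
`vy`, with the subgraph of `Λ` induced on `{u, x, v, y}` of chromatic number 2. -/
def IsObstructingPair {V : Type*} (R B F : SimpleGraph V) (p : Sym2 V × Sym2 V) : Prop :=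
  ∃ u x v y : V, p.1 = s(u, x) ∧ p.2 = s(v, y) ∧ R.Adj u x ∧ B.Adj v y ∧
    (SimpleGraph.induce {u, x, v, y} (LambdaGraph R B F)).chromaticNumber = 2

/-- The number of pairs of obstructing edges. -/
noncomputable def numObstructing {V : Type*} (R B F : SimpleGraph V) : ℕ :=
  Nat.card {p : Sym2 V × Sym2 V // IsObstructingPair R B F p}

/-- The number of 3-element vertex subsets inducing a triangle. -/
noncomputable def numTriangles {V : Type*} (G : SimpleGraph V) : ℕ :=
  Nat.card {s : Finset V // s.card = 3 ∧ ∀ a ∈ s, ∀ b ∈ s, a ≠ b → G.Adj a b}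

/-- A 2-edge-coloured graph is chromatically invariant when for each `k` its number of
`k`-colourings equals the number of proper `k`-colourings of the underlying graph. -/
def ChromaticallyInvariant {V : Type*} (R B : SimpleGraph V) : Prop :=
  ∀ k : ℕ, Nat.card {c : V → Fin k // IsMixedColouring R B ⊥ c} =
    Nat.card {c : V → Fin k // ∀ u v, (R ⊔ B).Adj u v → c u ≠ c v}

/-- A graph is a join when its vertex set has a partition into two non-empty parts with
every vertex of one part adjacent to every vertex of the other. -/
def IsJoin {W : Type*} (G : SimpleGraph W) : Prop :=
  ∃ X Y : Set W, X.Nonempty ∧ Y.Nonempty ∧ Disjoint X Y ∧ X ∪ Y = Set.univ ∧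
    ∀ x ∈ X, ∀ y ∈ Y, G.Adj x y

/-- Disjoint union of two simple graphs. -/
def disjUnion {α β : Type*} (G : SimpleGraph α) (H : SimpleGraph β) :
    SimpleGraph (α ⊕ β) where
  Adj a b := match a, b with
    | Sum.inl a, Sum.inl b => G.Adj a b
    | Sum.inr a, Sum.inr b => H.Adj a b
    | _, _ => False
  symm := ⟨by rintro (a | a) (b | b) h <;> simp_all <;> exact h.symm⟩
  loopless := ⟨by rintro (a | a) h <;> exact (SimpleGraph.irrefl _) h⟩

/-- The complete bipartite "cross" graph between the two sides of a sum type. -/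
def crossGraph (α β : Type*) : SimpleGraph (α ⊕ β) where
  Adj a b := match a, b with
    | Sum.inl _, Sum.inr _ => True
    | Sum.inr _, Sum.inl _ => True
    | _, _ => False
  symm := ⟨by rintro (a | a) (b | b) h <;> trivial⟩
  loopless := ⟨by rintro (a | a) h <;> exact h⟩

/-!
Folding a red edge `ux` onto a blue edge `wy` with `u, w` and `x, y` non-adjacent gives a proper
colouring of `Γ` that is not a colouring of `(Γ, R, B)`, so chromatic invariance forbids such
pairs; in particular the ends of a bichromatic 2-path are adjacent. Conversely, colouring the
edges of a join `X + Y` red across and blue inside, two vertices of equal colour lie on the same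
side, which makes every proper colouring a colouring of the 2-edge-coloured graph.

For the forward direction take `v` of minimum degree. Comparing degrees, the red or the blue
neighbours of `v`, say the red ones, are adjacent to every non-neighbour of `v`. If no red
neighbour of `v` is isolated among them, they form `X`. Otherwise such an isolated `p` has all
its neighbours complete to its non-neighbours, and then its red or its blue neighbours form `X`:
if both contained an isolated vertex, these would yield a foldable pair.
-/

section

variable {V : Type*}

/-- No red edge `ux` can be folded onto a blue edge `wy` by identifying `w` with `u` and `y`
with `x`: the fold would turn a proper colouring into one that is not a colouring of `(R, B)`. -/
def NoCollapsiblePair (R B G : SimpleGraph V) : Prop :=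
  ∀ ⦃u x w y : V⦄, R.Adj u x → B.Adj w y → ¬G.Adj u w → ¬G.Adj x y → u = y ∨ x = w

def IsJoinWithoutIsolated (G : SimpleGraph V) : Prop :=
  ∃ X Y : Set V, X.Nonempty ∧ Y.Nonempty ∧ Disjoint X Y ∧ X ∪ Y = Set.univ ∧
    (∀ x ∈ X, ∀ y ∈ Y, G.Adj x y) ∧
    (∀ x ∈ X, ∃ x' ∈ X, G.Adj x x') ∧ (∀ y ∈ Y, ∃ y' ∈ Y, G.Adj y y')

section Counting

variable [Finite V] {R B : SimpleGraph V}

theorem chromaticallyInvariant_iff :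
    ChromaticallyInvariant R B ↔ ∀ (k : ℕ) (c : V → Fin k),
      (∀ u v, (R ⊔ B).Adj u v → c u ≠ c v) → IsMixedColouring R B ⊥ c := by
  have hsub (k : ℕ) : {c : V → Fin k | IsMixedColouring R B ⊥ c} ⊆
      {c | ∀ u v, (R ⊔ B).Adj u v → c u ≠ c v} := fun c hc u v huv =>
    hc.1 u v (by rwa [sup_bot_eq])
  constructor
  · intro h k c hc
    have hle : Set.ncard {c : V → Fin k | ∀ u v, (R ⊔ B).Adj u v → c u ≠ c v} ≤
        Set.ncard {c : V → Fin k | IsMixedColouring R B ⊥ c} := by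
      rw [← Nat.card_coe_set_eq, ← Nat.card_coe_set_eq]
      exact (h k).ge
    have hc' : c ∈ {c : V → Fin k | ∀ u v, (R ⊔ B).Adj u v → c u ≠ c v} := hc
    rwa [← Set.eq_of_subset_of_ncard_le (hsub k) hle (Set.toFinite _)] at hc'
  · intro h k
    exact Nat.card_congr <| Equiv.subtypeEquivRight fun c => ⟨@hsub k c, h k c⟩

theorem ChromaticallyInvariant.noCollapsiblePair (h : ChromaticallyInvariant R B) :
    NoCollapsiblePair R B (R ⊔ B) := by
  classical
  intro u x w y hux hwy huw hxy
  by_contra! hne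
  let m : V → V := fun a => if a = w then u else if a = y then x else a
  let c : V → Fin (Nat.card V) := fun a => Finite.equivFin V (m a)
  have hproper : ∀ a b, (R ⊔ B).Adj a b → c a ≠ c b := by
    intro a b hab hcab
    have hm : m a = m b := (Finite.equivFin V).injective hcab
    simp only [m] at hm
    split_ifs at hm <;> subst_vars <;> grind [hab.ne, hux.ne, hwy.ne, SimpleGraph.Adj.symm]
  refine (chromaticallyInvariant_iff.1 h _ c hproper).2 u x w y hux hwy ?_ ?_ <;>
    simp [c, m, hne.1, hne.2, hwy.ne']

end Counting

theorem SimpleGraph.exists_adj_not_adj_of_degree_le {G : SimpleGraph V} [G.LocallyFinite]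
    {v a b : V} (hdeg : G.degree v ≤ G.degree a) (hvb : G.Adj v b) (hab : ¬G.Adj a b) :
    ∃ w, G.Adj a w ∧ ¬G.Adj v w := by
  by_contra! hsub
  have hssub : G.neighborFinset a ⊂ G.neighborFinset v :=
    (Finset.ssubset_iff_of_subset fun w hw => by simpa using hsub w (by simpa using hw)).2
      ⟨b, by simpa using hvb, by simpa using hab⟩
  have hlt := Finset.card_lt_card hssub
  rw [card_neighborFinset_eq_degree, card_neighborFinset_eq_degree] at hlt
  omega

structure IsCollapseFreeColouring (R B G : SimpleGraph V) : Prop where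
  sup_eq : R ⊔ B = G
  disjoint : Disjoint R B
  noCollapsiblePair : NoCollapsiblePair R B G
  exists_red_adj : ∀ v, ∃ w, R.Adj v w
  exists_blue_adj : ∀ v, ∃ w, B.Adj v w

namespace IsCollapseFreeColouring

variable {R B G : SimpleGraph V} {u v p q x y z w : V}

theorem symm (h : IsCollapseFreeColouring R B G) : IsCollapseFreeColouring B R G where
  sup_eq := sup_comm B R ▸ h.sup_eq
  disjoint := h.disjoint.symm
  noCollapsiblePair _ _ _ _ hux hwy huw hxy :=
    (h.noCollapsiblePair hwy hux (fun e => huw e.symm) (fun e => hxy e.symm)).symm.imp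
      Eq.symm Eq.symm
  exists_red_adj := h.exists_blue_adj
  exists_blue_adj := h.exists_red_adj

theorem adj_iff (h : IsCollapseFreeColouring R B G) : G.Adj x y ↔ R.Adj x y ∨ B.Adj x y := by
  rw [← h.sup_eq, sup_adj]

theorem red_adj (h : IsCollapseFreeColouring R B G) (hxy : R.Adj x y) : G.Adj x y :=
  h.adj_iff.2 (Or.inl hxy)

theorem blue_adj (h : IsCollapseFreeColouring R B G) (hxy : B.Adj x y) : G.Adj x y :=
  h.adj_iff.2 (Or.inr hxy)

theorem not_blue_of_red (h : IsCollapseFreeColouring R B G) (hxy : R.Adj x y) : ¬B.Adj x y :=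
  disjoint_left.1 h.disjoint x y hxy

theorem adj_of_red_of_blue (h : IsCollapseFreeColouring R B G) (hx : R.Adj v x)
    (hy : B.Adj v y) : G.Adj x y := by
  by_contra hxy
  rcases h.noCollapsiblePair hx hy G.irrefl hxy with rfl | rfl
  · exact hy.ne rfl
  · exact hx.ne rfl

theorem isJoinWithoutIsolated_of_red (h : IsCollapseFreeColouring R B G)
    (hcompl : ∀ x z, R.Adj u x → ¬G.Adj u z → G.Adj x z)
    (hconn : ∀ x, R.Adj u x → ∃ x', R.Adj u x' ∧ G.Adj x x') :
    IsJoinWithoutIsolated G := by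
  obtain ⟨p, hp⟩ := h.exists_red_adj u
  refine ⟨R.neighborSet u, (R.neighborSet u)ᶜ, ⟨p, hp⟩, ⟨u, R.irrefl⟩, disjoint_compl_right,
    Set.union_compl_self _, fun x hx y hy => ?_, hconn, fun y hy => ?_⟩
  · by_cases huy : G.Adj u y
    · exact h.adj_of_red_of_blue hx ((h.adj_iff.1 huy).resolve_left hy)
    · exact hcompl x y hx huy
  · obtain ⟨w, hw⟩ := h.exists_blue_adj y
    by_cases huw : R.Adj u w
    · exact ⟨u, R.irrefl, (h.adj_of_red_of_blue huw.symm hw.symm).symm⟩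
    · exact ⟨w, huw, h.blue_adj hw⟩

theorem blue_adj_of_isolated (h : IsCollapseFreeColouring R B G) (hp : R.Adj u p)
    (hiso : ∀ x, R.Adj u x → ¬G.Adj p x) (hw : B.Adj p w) : B.Adj u w :=
  (h.adj_iff.1 (h.adj_of_red_of_blue hp.symm hw)).resolve_left fun huw =>
    hiso w huw (h.blue_adj hw)

theorem false_of_isolated_red_of_isolated_blue (h : IsCollapseFreeColouring R B G)
    (hp : R.Adj u p) (hpiso : ∀ x, R.Adj u x → ¬G.Adj p x)
    (hq : B.Adj u q) (hqiso : ∀ y, B.Adj u y → ¬G.Adj q y) : False := by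
  obtain ⟨q₀, hq₀⟩ := h.exists_blue_adj p
  obtain ⟨p₀, hp₀⟩ := h.exists_red_adj q
  have huq₀ := h.blue_adj_of_isolated hp hpiso hq₀
  have hup₀ := h.symm.blue_adj_of_isolated hq hqiso hp₀
  rcases h.noCollapsiblePair hp₀ hq₀.symm (hqiso q₀ huq₀) (fun e => hpiso p₀ hup₀ e.symm)
    with rfl | rfl
  · exact h.not_blue_of_red hp hq
  · exact h.not_blue_of_red hup₀ huq₀

theorem isJoinWithoutIsolated_of_complete (h : IsCollapseFreeColouring R B G)
    (hcompl : ∀ x z, G.Adj u x → ¬G.Adj u z → G.Adj x z) : IsJoinWithoutIsolated G := by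
  by_cases hred : ∀ x, R.Adj u x → ∃ x', R.Adj u x' ∧ G.Adj x x'
  · exact h.isJoinWithoutIsolated_of_red (fun x z hx => hcompl x z (h.red_adj hx)) hred
  by_cases hblue : ∀ y, B.Adj u y → ∃ y', B.Adj u y' ∧ G.Adj y y'
  · exact h.symm.isJoinWithoutIsolated_of_red (fun y z hy => hcompl y z (h.blue_adj hy)) hblue
  push Not at hred hblue
  obtain ⟨p, hp, hpiso⟩ := hred
  obtain ⟨q, hq, hqiso⟩ := hblue
  exact (h.false_of_isolated_red_of_isolated_blue hp hpiso hq hqiso).elim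

theorem isJoinWithoutIsolated_of_red_complete (h : IsCollapseFreeColouring R B G)
    (hcompl : ∀ x z, R.Adj v x → ¬G.Adj v z → G.Adj x z) : IsJoinWithoutIsolated G := by
  by_cases hred : ∀ x, R.Adj v x → ∃ x', R.Adj v x' ∧ G.Adj x x'
  · exact h.isJoinWithoutIsolated_of_red hcompl hred
  push Not at hred
  obtain ⟨p, hp, hpiso⟩ := hred
  have hnon : ∀ z, ¬G.Adj p z → R.Adj v z := by
    intro z hpz
    by_cases hvz : G.Adj v z
    · exact (h.adj_iff.1 hvz).resolve_right fun hb => hpz (h.adj_of_red_of_blue hp hb)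
    · exact absurd (hcompl p z hp hvz) hpz
  refine h.isJoinWithoutIsolated_of_complete (u := p) fun x z hpx hpz => ?_
  have hvz := hnon z hpz
  by_cases hvx : G.Adj v x
  · rcases h.adj_iff.1 hvx with hr | hb
    · exact absurd hpx (hpiso x hr)
    · exact (h.adj_of_red_of_blue hvz hb).symm
  · exact (hcompl z x hvz hvx).symm

theorem blue_adj_of_far (h : IsCollapseFreeColouring R B G) (hp : R.Adj v p)
    (hvz : ¬G.Adj v z) (hpz : ¬G.Adj p z) (hzw : B.Adj z w) : B.Adj v w := by
  by_cases hvw : G.Adj v w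
  · exact (h.adj_iff.1 hvw).resolve_left fun hr =>
      hvz (h.adj_of_red_of_blue hr.symm hzw.symm)
  · rcases h.noCollapsiblePair hp.symm hzw hpz hvw with rfl | rfl
    · exact absurd (h.blue_adj hzw).symm hpz
    · exact hzw

theorem exists_red_adj_far (h : IsCollapseFreeColouring R B G) [G.LocallyFinite]
    (hdeg : G.degree v ≤ G.degree z) (hp : R.Adj v p) (hvz : ¬G.Adj v z) (hpz : ¬G.Adj p z) :
    ∃ w, R.Adj z w ∧ ¬G.Adj v w := by
  obtain ⟨w, hzw, hvw⟩ := exists_adj_not_adj_of_degree_le hdeg (h.red_adj hp) fun e => hpz e.symm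
  exact ⟨w, (h.adj_iff.1 hzw).resolve_right fun hb =>
    hvw (h.blue_adj (h.blue_adj_of_far hp hvz hpz hb)), hvw⟩

theorem blue_adj_of_red_far (h : IsCollapseFreeColouring R B G) (hzw : R.Adj z w)
    (hvw : ¬G.Adj v w) (hvz : ¬G.Adj v z) (hq : B.Adj v q) : B.Adj z q := by
  by_cases hzq : G.Adj z q
  · exact (h.adj_iff.1 hzq).resolve_left fun hr =>
      hvz (h.adj_of_red_of_blue hr.symm hq.symm).symm
  · rcases h.noCollapsiblePair hzw.symm hq (fun e => hvw e.symm) hzq with rfl | rfl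
    · exact absurd (h.blue_adj hq) hvw
    · exact hq

theorem red_complete_or_blue_complete (h : IsCollapseFreeColouring R B G) [G.LocallyFinite]
    (hmin : ∀ z, G.degree v ≤ G.degree z) :
    (∀ x z, R.Adj v x → ¬G.Adj v z → G.Adj x z) ∨
      (∀ y z, B.Adj v y → ¬G.Adj v z → G.Adj y z) := by
  by_contra! ⟨⟨p, z, hp, hvz, hpz⟩, ⟨q, z', hq, hvz', hqz'⟩⟩
  obtain ⟨w, hzw, hvw⟩ := h.exists_red_adj_far (hmin z) hp hvz hpz
  obtain ⟨w', hzw', hvw'⟩ := h.symm.exists_red_adj_far (hmin z') hq hvz' hqz'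
  have hzq : B.Adj z q := h.blue_adj_of_red_far hzw hvw hvz hq
  have hz'p : R.Adj z' p := h.symm.blue_adj_of_red_far hzw' hvw' hvz' hp
  have hzz' : z ≠ z' := by
    rintro rfl
    exact hvw (h.red_adj (h.symm.blue_adj_of_far hq hvz hqz' hzw))
  rcases h.noCollapsiblePair hz'p.symm hzq hpz fun e => hqz' e.symm with rfl | rfl
  · exact h.not_blue_of_red hp hq
  · exact hzz' rfl

theorem isJoinWithoutIsolated [Fintype V] [Nonempty V] (h : IsCollapseFreeColouring R B G) :
    IsJoinWithoutIsolated G := by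
  classical
  obtain ⟨v, hv⟩ := G.exists_minimal_degree_vertex
  rcases h.red_complete_or_blue_complete fun z => hv ▸ G.minDegree_le_degree z with hred | hblue
  · exact h.isJoinWithoutIsolated_of_red_complete hred
  · exact h.symm.isJoinWithoutIsolated_of_red_complete hblue

end IsCollapseFreeColouring

theorem IsJoinWithoutIsolated.exists_chromaticallyInvariant [Finite V] {Γ : SimpleGraph V}
    (hΓ : IsJoinWithoutIsolated Γ) :
    ∃ R B : SimpleGraph V, Disjoint R B ∧ R ⊔ B = Γ ∧ R ≠ ⊥ ∧ B ≠ ⊥ ∧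
      ChromaticallyInvariant R B ∧ (∀ v, ∃ w, R.Adj v w) ∧ (∀ v, ∃ w, B.Adj v w) := by
  obtain ⟨X, Y, ⟨x₀, hx₀⟩, ⟨y₀, hy₀⟩, hdisj, hcover, hjoin, hX, hY⟩ := hΓ
  obtain rfl : Xᶜ = Y := IsCompl.compl_eq ⟨hdisj, codisjoint_iff.2 hcover⟩
  have hcross : ∀ a b, ¬(a ∈ X ↔ b ∈ X) → Γ.Adj a b := by
    intro a b hab
    by_cases ha : a ∈ X
    · exact hjoin a ha b fun hb => hab (iff_of_true ha hb)
    · exact (hjoin b (by tauto) a ha).symm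
  set C : SimpleGraph V := fromRel fun a b => a ∈ X ∧ b ∉ X
  have hC : ∀ a b, C.Adj a b ↔ ¬(a ∈ X ↔ b ∈ X) := by
    intro a b
    simp only [C, fromRel_adj]
    constructor
    · tauto
    · exact fun h => ⟨by rintro rfl; exact h Iff.rfl, by tauto⟩
  have hred (v : V) : ∃ w, (Γ ⊓ C).Adj v w := by
    by_cases hv : v ∈ X
    · exact ⟨y₀, hjoin v hv y₀ hy₀, (hC v y₀).2 fun e => hy₀ (e.1 hv)⟩
    · exact ⟨x₀, (hjoin x₀ hx₀ v hv).symm, (hC v x₀).2 fun e => hv (e.2 hx₀)⟩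
  have hblue (v : V) : ∃ w, (Γ \ C).Adj v w := by
    by_cases hv : v ∈ X
    · obtain ⟨w, hw, hvw⟩ := hX v hv
      exact ⟨w, hvw, fun e => (hC v w).1 e (iff_of_true hv hw)⟩
    · obtain ⟨w, hw, hvw⟩ := hY v hv
      exact ⟨w, hvw, fun e => (hC v w).1 e (iff_of_false hv hw)⟩
  refine ⟨Γ ⊓ C, Γ \ C, disjoint_inf_sdiff, sup_inf_sdiff Γ C, ?_, ?_,
    chromaticallyInvariant_iff.2 fun k c hc => ⟨fun u v huv => hc u v (by simpa using huv), ?_⟩,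
    hred, hblue⟩
  · obtain ⟨w, hw⟩ := hred x₀
    exact ne_bot_iff_exists_adj.2 ⟨x₀, w, hw⟩
  · obtain ⟨w, hw⟩ := hblue x₀
    exact ne_bot_iff_exists_adj.2 ⟨x₀, w, hw⟩
  rw [sup_inf_sdiff] at hc
  intro u x w y hux hwy hcuw
  have huw : u ∈ X ↔ w ∈ X := by
    by_contra hne
    exact hc u w (hcross u w hne) hcuw
  have hwy : w ∈ X ↔ y ∈ X := not_not.1 fun hne => hwy.2 ((hC w y).2 hne)
  exact hc x y (hcross x y fun hxy => (hC u x).1 hux.2 (huw.trans (hwy.trans hxy.symm)))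

end

/-- A graph admits a non-trivial chromatically invariant 2-edge-colouring in which every
vertex is incident with both a red and a blue edge iff it is the join of two graphs each
of which has no isolated vertices. -/
theorem nontrivial_chromaticallyInvariant_colouring_iff_join
    {V : Type*} [Fintype V] (Γ : SimpleGraph V) :
    (∃ R B : SimpleGraph V, Disjoint R B ∧ R ⊔ B = Γ ∧ R ≠ ⊥ ∧ B ≠ ⊥ ∧
      ChromaticallyInvariant R B ∧
      (∀ v : V, ∃ w, R.Adj v w) ∧ (∀ v : V, ∃ w, B.Adj v w)) ↔
    (∃ X Y : Set V, X.Nonempty ∧ Y.Nonempty ∧ Disjoint X Y ∧ X ∪ Y = Set.univ ∧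
      (∀ x ∈ X, ∀ y ∈ Y, Γ.Adj x y) ∧
      (∀ x ∈ X, ∃ x' ∈ X, Γ.Adj x x') ∧ (∀ y ∈ Y, ∃ y' ∈ Y, Γ.Adj y y')) := by
  refine ⟨?_, IsJoinWithoutIsolated.exists_chromaticallyInvariant⟩
  rintro ⟨R, B, hdisj, rfl, hR, -, hCI, hred, hblue⟩
  obtain ⟨v, -, -⟩ := ne_bot_iff_exists_adj.1 hR
  have : Nonempty V := ⟨v⟩
  exact IsCollapseFreeColouring.isJoinWithoutIsolated
    ⟨rfl, hdisj, hCI.noCollapsiblePair, hred, hblue⟩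
end

section
/- Let n ≥ 2, let K_n^b be the 2-edge-coloured complete graph on n vertices all of whose edges are blue, and let H be the disjoint union of K_n^b with a single red edge on two new vertices. Then for every natural number k, the number of k-colourings of H equals k(k−1)(k−2)⋯(k−n) · (k+n−1), as an equation in the integers. -/
open SimpleGraph Polynomial

/-! A colouring consists of an injective colouring `f` of the blue clique together with an ordered
pair of distinct colours `(p, q)` for the red edge, subject only to `p` and `q` not both being
colours of `f`: otherwise the red edge and the blue edge between their two preimages clash.
There are `k (k-1) ⋯ (k-n+1)` choices of `f` and `k (k-1) - n (n-1) = (k-n)(k+n-1)` choices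
of `(p, q)`. -/
open Finset in
theorem Finset.card_offDiag_sdiff_offDiag {γ : Type*} [DecidableEq γ] {s t : Finset γ}
    (h : t ⊆ s) :
    (#(s.offDiag \ t.offDiag) : ℤ) = (#s - #t) * (#s + #t - 1) := by
  rw [card_sdiff_of_subset (offDiag_mono h), Nat.cast_sub (card_le_card (offDiag_mono h)),
    offDiag_card, offDiag_card, Nat.cast_sub (Nat.le_mul_self _),
    Nat.cast_sub (Nat.le_mul_self _)]
  push_cast
  ring

section DisjUnion

open Finset
variable {α β : Type*}

@[simp] lemma disjUnion_adj_inl (G : SimpleGraph α) (H : SimpleGraph β) (a a' : α) :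
    (disjUnion G H).Adj (.inl a) (.inl a') ↔ G.Adj a a' := Iff.rfl

@[simp] lemma disjUnion_adj_inr (G : SimpleGraph α) (H : SimpleGraph β) (b b' : β) :
    (disjUnion G H).Adj (.inr b) (.inr b') ↔ H.Adj b b' := Iff.rfl

@[simp] lemma not_disjUnion_adj_inl_inr (G : SimpleGraph α) (H : SimpleGraph β)
    (a : α) (b : β) : ¬(disjUnion G H).Adj (.inl a) (.inr b) := id

@[simp] lemma not_disjUnion_adj_inr_inl (G : SimpleGraph α) (H : SimpleGraph β)
    (a : α) (b : β) : ¬(disjUnion G H).Adj (.inr b) (.inl a) := id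

lemma isMixedColouring_disjUnion_iff {k : ℕ} (G : SimpleGraph α) (H : SimpleGraph β)
    (c : α ⊕ β → Fin k) :
    IsMixedColouring (disjUnion ⊥ H) (disjUnion G ⊥) ⊥ c ↔
      (∀ a a', G.Adj a a' → c (.inl a) ≠ c (.inl a')) ∧
      (∀ b b', H.Adj b b' → c (.inr b) ≠ c (.inr b')) ∧
      ∀ b b' a a', H.Adj b b' → G.Adj a a' → c (.inr b) = c (.inl a) →
        c (.inr b') ≠ c (.inl a') := by
  simp only [IsMixedColouring, Sum.forall, sup_adj, bot_adj, or_false, disjUnion_adj_inl,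
    disjUnion_adj_inr, not_disjUnion_adj_inl_inr, not_disjUnion_adj_inr_inl, false_or,
    false_imp_iff, imp_true_iff, and_true, true_and]
  exact and_assoc

lemma isMixedColouring_blueComplete_redEdge_iff [Fintype α] {k : ℕ}
    (c : α ⊕ Fin 2 → Fin k) :
    IsMixedColouring (disjUnion ⊥ (⊤ : SimpleGraph (Fin 2))) (disjUnion (⊤ : SimpleGraph α) ⊥) ⊥
        c ↔
      Function.Injective (c ∘ .inl) ∧
        (c (.inr 0), c (.inr 1)) ∈ univ.offDiag \ (univ.image (c ∘ .inl)).offDiag := by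
  simp only [isMixedColouring_disjUnion_iff, top_adj, Fin.forall_fin_two, mem_sdiff, mem_offDiag,
    mem_image, mem_univ, true_and, Function.comp_apply, ne_eq, not_true_eq_false,
    false_imp_iff, implies_true, and_true, true_and, zero_ne_one, one_ne_zero,
    not_false_eq_true, forall_const]
  constructor
  · rintro ⟨hinj, ⟨h01, -⟩, h01', -⟩
    refine ⟨fun a a' h => not_not.1 fun ha => hinj a a' ha h, h01, ?_⟩
    rintro ⟨⟨a, ha⟩, ⟨a', ha'⟩, -⟩
    have haa' : a ≠ a' := by rintro rfl; exact h01 (ha.symm.trans ha')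
    exact h01' a a' haa' ha.symm ha'.symm
  · rintro ⟨hinj, h01, hrange⟩
    refine ⟨fun a a' ha h => ha (hinj h), ⟨h01, Ne.symm h01⟩,
      fun a a' _ ha ha' => ?_, fun a a' _ ha ha' => ?_⟩
    · exact hrange ⟨⟨a, ha.symm⟩, ⟨a', ha'.symm⟩, h01⟩
    · exact hrange ⟨⟨a', ha'.symm⟩, ⟨a, ha.symm⟩, h01⟩

theorem numColourings_blueComplete_disjUnion_redEdge_eq (α : Type*) [Fintype α] (k : ℕ) :
    (numColourings (disjUnion ⊥ (⊤ : SimpleGraph (Fin 2))) (disjUnion (⊤ : SimpleGraph α) ⊥) ⊥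
        k : ℤ) = k.descFactorial (Fintype.card α) *
      (((k : ℤ) - Fintype.card α) * (k + Fintype.card α - 1)) := by
  classical
  set n := Fintype.card α
  let Admissible (f : α → Fin k) (pq : Fin k × Fin k) : Prop :=
    Function.Injective f ∧ pq ∈ univ.offDiag \ (univ.image f).offDiag
  have fibre (f : α → Fin k) : (Fintype.card (Subtype (Admissible f)) : ℤ) =
      if Function.Injective f then ((k : ℤ) - n) * (k + n - 1) else 0 := by
    split_ifs with hf
    · simp only [Admissible, hf, true_and, Fintype.card_coe]
      rw [card_offDiag_sdiff_offDiag (subset_univ _), card_univ, Fintype.card_fin,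
        card_image_of_injective _ hf, card_univ]
    · simp [Admissible, hf]
  have e : {c // IsMixedColouring (disjUnion ⊥ (⊤ : SimpleGraph (Fin 2)))
      (disjUnion (⊤ : SimpleGraph α) ⊥) ⊥ c} ≃ Σ f, Subtype (Admissible f) :=
    (Equiv.subtypeEquiv ((Equiv.sumArrowEquivProdArrow _ _ _).trans
      ((Equiv.refl _).prodCongr (piFinTwoEquiv _))) isMixedColouring_blueComplete_redEdge_iff).trans
      (Equiv.subtypeProdEquivSigmaSubtype Admissible)
  calc (numColourings _ _ _ k : ℤ)
      = ∑ f, (Fintype.card (Subtype (Admissible f)) : ℤ) := by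
        rw [numColourings, Nat.card_congr e, Nat.card_eq_fintype_card, Fintype.card_sigma,
          Nat.cast_sum]
    _ = ∑ f, if Function.Injective f then ((k : ℤ) - n) * (k + n - 1) else 0 :=
        sum_congr rfl fun f _ => fibre f
    _ = k.descFactorial n * (((k : ℤ) - n) * (k + n - 1)) := by
        rw [sum_ite, sum_const_zero, add_zero, sum_const, nsmul_eq_mul, ← Fintype.card_subtype,
          Fintype.card_congr (Equiv.subtypeInjectiveEquivEmbedding α (Fin k)),
          Fintype.card_embedding_eq, Fintype.card_fin]

end DisjUnion

theorem numColourings_blueComplete_disjUnion_redEdge_general (n : ℕ) :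
    ∀ k : ℕ,
      (numColourings (disjUnion (⊥ : SimpleGraph (Fin n)) (⊤ : SimpleGraph (Fin 2)))
          (disjUnion (⊤ : SimpleGraph (Fin n)) (⊥ : SimpleGraph (Fin 2))) ⊥ k : ℤ) =
        (∏ i ∈ Finset.range (n + 1), ((k : ℤ) - (i : ℤ))) * ((k : ℤ) + (n : ℤ) - 1) := by
  intro k
  rw [numColourings_blueComplete_disjUnion_redEdge_eq, Fintype.card_fin,
    ← descPochhammer_eval_eq_descFactorial ℤ, descPochhammer_eval_eq_prod_range,
    Finset.prod_range_succ, mul_assoc]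

/-- The number of `k`-colourings of the disjoint union of an all-blue complete graph on
`n ≥ 2` vertices with a single red edge is `k(k-1)⋯(k-n)(k+n-1)`. -/
theorem numColourings_blueComplete_disjUnion_redEdge (n : ℕ) (hn : 2 ≤ n) :
    ∀ k : ℕ,
      (numColourings (disjUnion (⊥ : SimpleGraph (Fin n)) (⊤ : SimpleGraph (Fin 2)))
          (disjUnion (⊤ : SimpleGraph (Fin n)) (⊥ : SimpleGraph (Fin 2))) ⊥ k : ℤ) =
        (∏ i ∈ Finset.range (n + 1), ((k : ℤ) - (i : ℤ))) * ((k : ℤ) + (n : ℤ) - 1) :=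
  numColourings_blueComplete_disjUnion_redEdge_general n
end

section
/- Let G be a 2-edge-coloured graph on n ≥ 1 vertices and let P be its chromatic polynomial. If q is a rational number with P(q) = 0, then q is an integer. -/
open SimpleGraph Polynomial

/-! A colouring is determined, up to the choice of colours, by its kernel: the partition of the
vertices into colour classes, and whether it is a colouring depends only on that partition. A
partition with `j` blocks is the kernel of exactly `k (k - 1) ⋯ (k - j + 1)` maps into `k` colours,
so the chromatic polynomial is the integer polynomial `∑ (X)ⱼ`, summed over the admissible
partitions. It is monic: the discrete partition is admissible because no edge is both red and blue,
and it is the only partition with `|V|` blocks. A rational root of a monic integer polynomial is an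
integer. -/

namespace Setoid

variable {α β : Type*}

instance [Finite α] : Finite (Setoid α) :=
  Finite.of_injective (fun s : Setoid α => (s : α → α → Prop)) fun _ _ h => Setoid.ext (by simp [h])

def kerFiberEquivEmbedding (s : Setoid α) : {f : α → β // ker f = s} ≃ (Quotient s ↪ β) where
  toFun f := ⟨Quotient.lift f.1 fun _ _ h => ker_def.1 (by rwa [f.2]),
    Quotient.ind₂ fun _ _ h => Quotient.sound (by rw [← f.2]; exact ker_def.2 h)⟩
  invFun e := ⟨e ∘ Quotient.mk s, by ext; simp [ker_def, Quotient.eq]⟩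
  left_inv _ := rfl
  right_inv _ := by ext x; induction x using Quotient.ind; rfl

theorem card_kerFiber [Finite α] [Finite β] (s : Setoid α) :
    Nat.card {f : α → β // ker f = s} = (Nat.card β).descFactorial (Nat.card (Quotient s)) := by
  classical
  have := Fintype.ofFinite α
  have := Fintype.ofFinite β
  rw [Nat.card_congr (kerFiberEquivEmbedding s), Nat.card_eq_fintype_card,
    Fintype.card_embedding_eq, Nat.card_eq_fintype_card, Nat.card_eq_fintype_card]

theorem card_quotient_bot [Finite α] : Nat.card (Quotient (⊥ : Setoid α)) = Nat.card α :=
  (Nat.card_eq_of_bijective _ ⟨fun _ _ h => Quotient.exact h, Quotient.mk_surjective⟩).symm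

theorem card_quotient_lt_of_ne_bot [Finite α] {s : Setoid α} (hs : s ≠ ⊥) :
    Nat.card (Quotient s) < Nat.card α := by
  refine (Nat.card_le_card_of_surjective _ Quotient.mk''_surjective).lt_of_ne fun h => hs ?_
  rw [← ker_mk_eq s, ker_eq_bot_iff]
  exact ((Nat.bijective_iff_surjective_and_card _).2 ⟨Quotient.mk''_surjective, h.symm⟩).1

end Setoid

section MixedPartition

variable {V : Type*} (R B F : SimpleGraph V)

def IsMixedPartition (s : Setoid V) : Prop :=
  (∀ u v, (R ⊔ B ⊔ F).Adj u v → ¬ s u v) ∧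
  (∀ u x v y, R.Adj u x → B.Adj v y → s u v → ¬ s x y)

theorem isMixedColouring_iff_ker {k : ℕ} (c : V → Fin k) :
    IsMixedColouring R B F c ↔ IsMixedPartition R B F (Setoid.ker c) :=
  Iff.rfl

theorem isMixedPartition_bot (hRB : Disjoint R B) : IsMixedPartition R B F ⊥ := by
  refine ⟨fun u v huv h => huv.ne h, ?_⟩
  rintro u x v y hux hvy (rfl : u = v) (rfl : x = y)
  exact hRB.le_bot ⟨hux, hvy⟩

noncomputable def mixedPartitions [Finite V] : Finset (Setoid V) :=
  (Set.toFinite {s | IsMixedPartition R B F s}).toFinset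

theorem mem_mixedPartitions [Finite V] {s : Setoid V} :
    s ∈ mixedPartitions R B F ↔ IsMixedPartition R B F s :=
  Set.Finite.mem_toFinset _

theorem numColourings_eq_sum_descFactorial [Finite V] (k : ℕ) :
    numColourings R B F k =
      ∑ s ∈ mixedPartitions R B F, k.descFactorial (Nat.card (Quotient s)) := by
  rw [numColourings, ← Nat.card_congr (Equiv.sigmaSubtypeFiberEquivSubtype Setoid.ker
      (p := IsMixedColouring R B F) (q := (· ∈ mixedPartitions R B F))
      fun c => (isMixedColouring_iff_ker R B F c).trans (mem_mixedPartitions R B F).symm),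
    Nat.card_sigma]
  simp only [Setoid.card_kerFiber, Nat.card_eq_fintype_card, Fintype.card_fin]
  exact Finset.sum_coe_sort (mixedPartitions R B F) fun s => k.descFactorial (Nat.card (Quotient s))

noncomputable def mixedChromaticPoly [Finite V] : ℤ[X] :=
  ∑ s ∈ mixedPartitions R B F, descPochhammer ℤ (Nat.card (Quotient s))

theorem eval_mixedChromaticPoly [Finite V] (k : ℕ) :
    (mixedChromaticPoly R B F).eval (k : ℤ) = numColourings R B F k := by
  simp [mixedChromaticPoly, eval_finsetSum, descPochhammer_eval_eq_descFactorial,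
    numColourings_eq_sum_descFactorial]

theorem monic_mixedChromaticPoly [Finite V] (hRB : Disjoint R B) :
    (mixedChromaticPoly R B F).Monic := by
  classical
  have degree_descPochhammer (n : ℕ) : (descPochhammer ℤ n).degree = n := by
    rw [degree_eq_natDegree (monic_descPochhammer ℤ n).ne_zero, descPochhammer_natDegree]
  have hbot := (mem_mixedPartitions R B F).2 (isMixedPartition_bot R B F hRB)
  rw [mixedChromaticPoly, ← Finset.add_sum_erase _ _ hbot]
  refine (monic_descPochhammer ℤ _).add_of_left ((degree_sum_le _ _).trans_lt ?_)
  rw [degree_descPochhammer, Finset.sup_lt_iff (WithBot.bot_lt_coe _)]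
  intro s hs
  rw [degree_descPochhammer, Setoid.card_quotient_bot, Nat.cast_lt]
  exact Setoid.card_quotient_lt_of_ne_bot (Finset.ne_of_mem_erase hs)

end MixedPartition

theorem rational_root_isInt_general
    {V : Type*} [Fintype V] (R B : SimpleGraph V) (hRB : Disjoint R B)
    (P : Polynomial ℚ) (hP : ∀ k : ℕ, P.eval (k : ℚ) = numColourings R B ⊥ k)
    (q : ℚ) (hq : P.eval q = 0) : ∃ m : ℤ, q = (m : ℚ) := by
  set Q := mixedChromaticPoly R B ⊥
  have hPQ : P = Q.map (algebraMap ℤ ℚ) := by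
    refine eq_of_infinite_eval_eq _ _ (Set.infinite_range_of_injective Nat.cast_injective |>.mono ?_)
    rintro _ ⟨k, rfl⟩
    rw [Set.mem_ofPred_eq, hP, eval_map, eval₂_at_natCast, eval_mixedChromaticPoly]
    simp
  have hQ : Q.Monic := monic_mixedChromaticPoly R B ⊥ hRB
  obtain ⟨m, hm⟩ := isInteger_of_is_root_of_monic hQ (r := q)
    (by rwa [aeval_def, eval₂_eq_eval_map, ← hPQ])
  exact ⟨m, by simpa using hm.symm⟩

/-- Every rational root of the chromatic polynomial of a 2-edge-coloured graph is an
integer. -/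
theorem rational_root_isInt
    {V : Type*} [Fintype V] [Nonempty V] (R B : SimpleGraph V) (hRB : Disjoint R B)
    (P : Polynomial ℚ) (hP : ∀ k : ℕ, P.eval (k : ℚ) = numColourings R B ⊥ k)
    (q : ℚ) (hq : P.eval q = 0) : ∃ m : ℤ, q = (m : ℚ) :=
  rational_root_isInt_general R B hRB P hP q hq
end
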